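/- arXiv:1901.08381 — 2 statements merged into one kernel-verified Lean document; each statement's English description precedes it below -/
import Mathlib

section
/- For 0 ≤ ν < μ < 1 and 0 ≤ q < 1, define φ_{q,μ,ν}(j | g) = μ^j ((ν/μ;q)_j (μ;q)_{g-j} / (ν;q)_g) ((q;q)_g / ((q;q)_j (q;q)_{g-j})) for 0 ≤ j ≤ g, and π_g = d^g ((ν;q)_g/(q;q)_g) ((d;q)_∞/(νd;q)_∞) for 0 < d < 1. Then ∑_{g ≥ j} φ_{q,μ,ν}(j | g) π_g = (μd)^j ((ν/μ;q)_j / (q;q)_j) ((μd;q)_∞ / (νd;q)_∞) for every j ≥ 0. -/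
set_option maxHeartbeats 1000000

/-- The finite q-Pochhammer symbol `(a;q)_n = ∏_{j=0}^{n-1} (1 - a q^j)`. -/
noncomputable def qPoch (q a : ℝ) (n : ℕ) : ℝ := ∏ j ∈ Finset.range n, (1 - a * q ^ j)

/-- The infinite q-Pochhammer symbol `(a;q)_∞ = ∏_{j≥0} (1 - a q^j)`. -/
noncomputable def qPochInf (q a : ℝ) : ℝ := ∏' j : ℕ, (1 - a * q ^ j)

/-- The q-deformed Beta-binomial weight
`φ_{q,μ,ν}(j|g) = μ^j ((ν/μ;q)_j (μ;q)_{g-j}/(ν;q)_g) ((q;q)_g/((q;q)_j (q;q)_{g-j}))`. -/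
noncomputable def phiQ (q μ ν : ℝ) (j g : ℕ) : ℝ :=
  μ ^ j * (qPoch q (ν / μ) j * qPoch q μ (g - j) / qPoch q ν g) *
    (qPoch q q g / (qPoch q q j * qPoch q q (g - j)))

open Finset Filter Topology Real

lemma qPoch_succ (q a : ℝ) (n : ℕ) : qPoch q a (n + 1) = qPoch q a n * (1 - a * q ^ n) :=
  Finset.prod_range_succ _ _

lemma qPoch_zero (q a : ℝ) : qPoch q a 0 = 1 := Finset.prod_range_zero _

lemma one_sub_factor_pos {q c : ℝ} (hq0 : 0 ≤ q) (hq1 : q ≤ 1) (hc0 : 0 ≤ c) (hc1 : c < 1)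
    (k : ℕ) : 0 < 1 - c * q ^ k := by
  have h1 : q ^ k ≤ 1 := pow_le_one₀ hq0 hq1
  nlinarith [pow_nonneg hq0 k]

lemma qPoch_pos {q c : ℝ} (hq0 : 0 ≤ q) (hq1 : q ≤ 1) (hc0 : 0 ≤ c) (hc1 : c < 1) (n : ℕ) :
    0 < qPoch q c n :=
  Finset.prod_pos fun k _ => one_sub_factor_pos hq0 hq1 hc0 hc1 k

lemma multipliable_qfac {q c : ℝ} (hq0 : 0 ≤ q) (hq1 : q < 1) (hc0 : 0 ≤ c) (hc1 : c < 1) :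
    Multipliable (fun k : ℕ => 1 - c * q ^ k) := by
  have hpos : ∀ k : ℕ, 0 < 1 - c * q ^ k := one_sub_factor_pos hq0 hq1.le hc0 hc1
  have hsum : Summable (fun k : ℕ => Real.log (1 - c * q ^ k)) := by
    apply Summable.of_norm
    refine Summable.of_nonneg_of_le (fun k => norm_nonneg _) (fun k => ?_)
      ((summable_geometric_of_lt_one hq0 hq1).mul_left (c / (1 - c)))
    · have hk := hpos k
      have h1 : q ^ k ≤ 1 := pow_le_one₀ hq0 hq1.le
      have hqk : 0 ≤ q ^ k := pow_nonneg hq0 k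
      have hle : c * q ^ k ≤ c := by nlinarith
      have hlog : Real.log (1 - c * q ^ k) ≤ 0 :=
        Real.log_nonpos (by linarith) (by nlinarith)
      rw [Real.norm_eq_abs, abs_of_nonpos hlog]
      have h2 : Real.log (1 - c * q ^ k)⁻¹ ≤ (1 - c * q ^ k)⁻¹ - 1 :=
        Real.log_le_sub_one_of_pos (inv_pos.mpr hk)
      rw [Real.log_inv] at h2
      have h3 : (1 - c * q ^ k)⁻¹ - 1 = c * q ^ k / (1 - c * q ^ k) := by
        field_simp
        ring
      have h4 : c * q ^ k / (1 - c * q ^ k) ≤ c * q ^ k / (1 - c) := by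
        apply div_le_div_of_nonneg_left (by positivity) (by linarith) (by nlinarith)
      calc -Real.log (1 - c * q ^ k) ≤ (1 - c * q ^ k)⁻¹ - 1 := by linarith
        _ = c * q ^ k / (1 - c * q ^ k) := h3
        _ ≤ c * q ^ k / (1 - c) := h4
        _ = c / (1 - c) * q ^ k := by ring
  have h := hsum.hasSum.rexp
  have heq : (Real.exp ∘ fun k : ℕ => Real.log (1 - c * q ^ k))
      = fun k : ℕ => 1 - c * q ^ k := by
    funext k; exact Real.exp_log (hpos k)
  rw [heq] at h
  exact h.multipliable

/-- The coefficient `(a;q)_m / (q;q)_m`. -/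
noncomputable def qCoef (q a : ℝ) (m : ℕ) : ℝ := qPoch q a m / qPoch q q m

section qBinom

variable {q a : ℝ} (hq0 : 0 ≤ q) (hq1 : q < 1) (ha0 : 0 ≤ a) (ha1 : a < 1)

include hq0 hq1 ha0 ha1

lemma qCoef_pos (m : ℕ) : 0 < qCoef q a m :=
  div_pos (qPoch_pos hq0 hq1.le ha0 ha1 m) (qPoch_pos hq0 hq1.le hq0 hq1 m)

lemma qCoef_rec (m : ℕ) :
    qCoef q a (m + 1) * (1 - q ^ (m + 1)) = qCoef q a m * (1 - a * q ^ m) := by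
  have h1 : qPoch q q m ≠ 0 := (qPoch_pos hq0 hq1.le hq0 hq1 m).ne'
  have h2 : 1 - q * q ^ m ≠ 0 := (one_sub_factor_pos hq0 hq1.le hq0 hq1 m).ne'
  unfold qCoef
  rw [qPoch_succ, qPoch_succ, pow_succ']
  rw [← div_div, div_mul_cancel₀ _ h2]
  ring

lemma summable_qser {z : ℝ} (hz0 : 0 ≤ z) (hz1 : z < 1) :
    Summable (fun m : ℕ => qCoef q a m * z ^ m) := by
  rcases eq_or_lt_of_le hz0 with h | hz0'
  · apply summable_of_ne_finset_zero (s := {0})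
    intro m hm
    simp only [Finset.mem_singleton] at hm
    rw [← h, zero_pow hm, mul_zero]
  · have hq2 : ∀ m : ℕ, 0 < 1 - q ^ (m + 1) := by
      intro m
      have := one_sub_factor_pos hq0 hq1.le hq0 hq1 m
      rwa [← pow_succ'] at this
    have ha2 : ∀ m : ℕ, 0 < 1 - a * q ^ m := one_sub_factor_pos hq0 hq1.le ha0 ha1
    have hfpos : ∀ m : ℕ, 0 < qCoef q a m * z ^ m := fun m =>
      mul_pos (qCoef_pos hq0 hq1 ha0 ha1 m) (pow_pos hz0' m)
    apply summable_of_ratio_test_tendsto_lt_one hz1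
      (Filter.Eventually.of_forall fun m => (hfpos m).ne')
    have key : ∀ m : ℕ, ‖qCoef q a (m + 1) * z ^ (m + 1)‖ / ‖qCoef q a m * z ^ m‖
        = z * (1 - a * q ^ m) / (1 - q ^ (m + 1)) := by
      intro m
      rw [Real.norm_eq_abs, Real.norm_eq_abs, abs_of_pos (hfpos (m + 1)), abs_of_pos (hfpos m),
        div_eq_div_iff (hfpos m).ne' (hq2 m).ne']
      have := qCoef_rec hq0 hq1 ha0 ha1 m
      linear_combination (z ^ (m + 1)) * this
    rw [show (fun m : ℕ => ‖qCoef q a (m + 1) * z ^ (m + 1)‖ / ‖qCoef q a m * z ^ m‖)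
        = fun m : ℕ => z * (1 - a * q ^ m) / (1 - q ^ (m + 1)) from funext key]
    have hpow : Tendsto (fun m : ℕ => q ^ m) atTop (𝓝 0) :=
      tendsto_pow_atTop_nhds_zero_of_lt_one hq0 hq1
    have hnum : Tendsto (fun m : ℕ => z * (1 - a * q ^ m)) atTop (𝓝 (z * (1 - a * 0))) :=
      (tendsto_const_nhds.sub (hpow.const_mul a)).const_mul z
    have hden : Tendsto (fun m : ℕ => 1 - q ^ (m + 1)) atTop (𝓝 (1 - 0)) := by
      have : Tendsto (fun m : ℕ => q ^ (m + 1)) atTop (𝓝 0) := by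
        exact hpow.comp (tendsto_add_atTop_nat 1)
      exact tendsto_const_nhds.sub this
    have := hnum.div hden (by norm_num)
    simp only [mul_zero, sub_zero, mul_one, div_one] at this
    exact this

/-- The shift-by-one operator on sequences, padding with `0`. -/
lemma funcEq {z : ℝ} (hz0 : 0 ≤ z) (hz1 : z < 1) :
    (1 - z) * ∑' m : ℕ, qCoef q a m * z ^ m
      = (1 - a * z) * ∑' m : ℕ, qCoef q a m * (q * z) ^ m := by
  have hqz0 : 0 ≤ q * z := mul_nonneg hq0 hz0
  have hqz1 : q * z < 1 := by nlinarith
  have hf : Summable (fun m : ℕ => qCoef q a m * z ^ m) := summable_qser hq0 hq1 ha0 ha1 hz0 hz1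
  have hg : Summable (fun m : ℕ => qCoef q a m * (q * z) ^ m) :=
    summable_qser hq0 hq1 ha0 ha1 hqz0 hqz1
  set G : ℕ → ℝ := fun m => Nat.rec 0 (fun n _ => qCoef q a n * z ^ (n + 1)) m with hGdef
  set H : ℕ → ℝ := fun m => Nat.rec 0 (fun n _ => (a * z) * (qCoef q a n * (q * z) ^ n)) m
    with hHdef
  have hG1 : (fun n : ℕ => G (n + 1)) = fun n : ℕ => (qCoef q a n * z ^ n) * z := by
    funext n; simp [hGdef]; ring
  have hH1 : (fun n : ℕ => H (n + 1)) = fun n : ℕ => (a * z) * (qCoef q a n * (q * z) ^ n) := by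
    funext n; simp [hHdef]
  have hGs : Summable G := by
    rw [← summable_nat_add_iff 1, hG1]
    exact hf.mul_right z
  have hHs : Summable H := by
    rw [← summable_nat_add_iff 1, hH1]
    exact hg.mul_left (a * z)
  have hGt : ∑' m, G m = z * ∑' m, qCoef q a m * z ^ m := by
    rw [Summable.tsum_eq_zero_add hGs]
    simp only [hG1]
    rw [tsum_mul_right]
    simp [hGdef, mul_comm]
  have hHt : ∑' m, H m = a * z * ∑' m, qCoef q a m * (q * z) ^ m := by
    rw [Summable.tsum_eq_zero_add hHs]
    simp only [hH1]
    rw [tsum_mul_left]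
    simp [hHdef, mul_assoc]
  have termEq : ∀ m : ℕ, qCoef q a m * z ^ m - G m = qCoef q a m * (q * z) ^ m - H m := by
    intro m
    cases m with
    | zero => simp [hGdef, hHdef]
    | succ n =>
      show qCoef q a (n + 1) * z ^ (n + 1) - qCoef q a n * z ^ (n + 1)
          = qCoef q a (n + 1) * (q * z) ^ (n + 1) - (a * z) * (qCoef q a n * (q * z) ^ n)
      have := qCoef_rec hq0 hq1 ha0 ha1 n
      linear_combination (z ^ (n + 1)) * this
  calc (1 - z) * ∑' m : ℕ, qCoef q a m * z ^ m
      = (∑' m : ℕ, qCoef q a m * z ^ m) - ∑' m, G m := by rw [hGt]; ring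
    _ = ∑' m : ℕ, (qCoef q a m * z ^ m - G m) := (Summable.tsum_sub hf hGs).symm
    _ = ∑' m : ℕ, (qCoef q a m * (q * z) ^ m - H m) := tsum_congr termEq
    _ = (∑' m : ℕ, qCoef q a m * (q * z) ^ m) - ∑' m, H m := Summable.tsum_sub hg hHs
    _ = (1 - a * z) * ∑' m : ℕ, qCoef q a m * (q * z) ^ m := by rw [hHt]; ring

lemma iterEq {z : ℝ} (hz0 : 0 ≤ z) (hz1 : z < 1) (n : ℕ) :
    (∑' m : ℕ, qCoef q a m * z ^ m) * ∏ k ∈ Finset.range n, (1 - z * q ^ k)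
      = (∑' m : ℕ, qCoef q a m * (q ^ n * z) ^ m) * ∏ k ∈ Finset.range n, (1 - a * z * q ^ k) := by
  induction n with
  | zero => simp
  | succ n ih =>
    have hw0 : 0 ≤ q ^ n * z := mul_nonneg (pow_nonneg hq0 n) hz0
    have hw1 : q ^ n * z < 1 := by
      have h1 : q ^ n ≤ 1 := pow_le_one₀ hq0 hq1.le
      nlinarith
    have hfe := funcEq hq0 hq1 ha0 ha1 hw0 hw1
    have harg : (fun m : ℕ => qCoef q a m * (q * (q ^ n * z)) ^ m)
        = fun m : ℕ => qCoef q a m * (q ^ (n + 1) * z) ^ m := by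
      funext m; rw [pow_succ']; ring_nf
    rw [harg] at hfe
    rw [Finset.prod_range_succ, Finset.prod_range_succ]
    linear_combination (1 - z * q ^ n) * ih
      + (∏ k ∈ Finset.range n, (1 - a * z * q ^ k)) * hfe

lemma tendsto_tail_one {z : ℝ} (hz0 : 0 ≤ z) (hz1 : z < 1) :
    Tendsto (fun n : ℕ => ∑' m : ℕ, qCoef q a m * (q ^ n * z) ^ m) atTop (𝓝 1) := by
  set T : ℝ := ∑' m : ℕ, qCoef q a (m + 1) * z ^ (m + 1) with hT
  have hq2 : ∀ n : ℕ, 0 ≤ q ^ n := fun n => pow_nonneg hq0 n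
  have hq3 : ∀ n : ℕ, q ^ n ≤ 1 := fun n => pow_le_one₀ hq0 hq1.le
  have hsumz : Summable (fun m : ℕ => qCoef q a m * z ^ m) :=
    summable_qser hq0 hq1 ha0 ha1 hz0 hz1
  have hsumz1 : Summable (fun m : ℕ => qCoef q a (m + 1) * z ^ (m + 1)) := by
    have := (summable_nat_add_iff 1).mpr hsumz
    exact this
  have hbound : ∀ n : ℕ, 1 ≤ (∑' m : ℕ, qCoef q a m * (q ^ n * z) ^ m)
      ∧ (∑' m : ℕ, qCoef q a m * (q ^ n * z) ^ m) ≤ 1 + q ^ n * T := by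
    intro n
    have hw0 : 0 ≤ q ^ n * z := mul_nonneg (hq2 n) hz0
    have hw1 : q ^ n * z < 1 := by nlinarith [hq2 n, hq3 n]
    have hs : Summable (fun m : ℕ => qCoef q a m * (q ^ n * z) ^ m) :=
      summable_qser hq0 hq1 ha0 ha1 hw0 hw1
    have hs1 : Summable (fun m : ℕ => qCoef q a (m + 1) * (q ^ n * z) ^ (m + 1)) :=
      (summable_nat_add_iff 1).mpr hs
    have hsplit : (∑' m : ℕ, qCoef q a m * (q ^ n * z) ^ m)
        = 1 + ∑' m : ℕ, qCoef q a (m + 1) * (q ^ n * z) ^ (m + 1) := by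
      rw [Summable.tsum_eq_zero_add hs]
      simp [qCoef, qPoch_zero]
    constructor
    · rw [hsplit]
      have : 0 ≤ ∑' m : ℕ, qCoef q a (m + 1) * (q ^ n * z) ^ (m + 1) :=
        tsum_nonneg fun m => mul_nonneg (qCoef_pos hq0 hq1 ha0 ha1 (m + 1)).le
          (pow_nonneg hw0 _)
      linarith
    · rw [hsplit]
      have htail : (∑' m : ℕ, qCoef q a (m + 1) * (q ^ n * z) ^ (m + 1))
          ≤ ∑' m : ℕ, q ^ n * (qCoef q a (m + 1) * z ^ (m + 1)) := by
        apply Summable.tsum_le_tsum _ hs1 (hsumz1.mul_left _)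
        intro m
        have h1 : (q ^ n * z) ^ (m + 1) = (q ^ n) ^ (m + 1) * z ^ (m + 1) := mul_pow _ _ _
        have h2 : (q ^ n) ^ (m + 1) ≤ q ^ n := by
          calc (q ^ n) ^ (m + 1) ≤ (q ^ n) ^ 1 :=
            pow_le_pow_of_le_one (hq2 n) (hq3 n) (Nat.le_add_left 1 m)
          _ = q ^ n := pow_one _
        have h3 : 0 ≤ z ^ (m + 1) := pow_nonneg hz0 _
        have h4 : 0 ≤ qCoef q a (m + 1) := (qCoef_pos hq0 hq1 ha0 ha1 (m + 1)).le
        calc qCoef q a (m + 1) * (q ^ n * z) ^ (m + 1)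
            = qCoef q a (m + 1) * ((q ^ n) ^ (m + 1) * z ^ (m + 1)) := by rw [h1]
          _ ≤ qCoef q a (m + 1) * (q ^ n * z ^ (m + 1)) := by
              have h5 := mul_le_mul_of_nonneg_right h2 h3
              exact mul_le_mul_of_nonneg_left h5 h4
          _ = q ^ n * (qCoef q a (m + 1) * z ^ (m + 1)) := by ring
      rw [tsum_mul_left] at htail
      linarith
  have hpow : Tendsto (fun n : ℕ => q ^ n) atTop (𝓝 0) :=
    tendsto_pow_atTop_nhds_zero_of_lt_one hq0 hq1
  have hup : Tendsto (fun n : ℕ => 1 + q ^ n * T) atTop (𝓝 1) := by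
    have := tendsto_const_nhds (x := (1 : ℝ)) (f := atTop (α := ℕ))
    have h2 : Tendsto (fun n : ℕ => q ^ n * T) atTop (𝓝 0) := by
      simpa using hpow.mul_const T
    simpa using this.add h2
  exact tendsto_of_tendsto_of_tendsto_of_le_of_le tendsto_const_nhds hup
    (fun n => (hbound n).1) (fun n => (hbound n).2)

/-- The q-binomial theorem (Cauchy's identity), in a division-free form. -/
lemma qBinomial {z : ℝ} (hz0 : 0 ≤ z) (hz1 : z < 1) :
    (∑' m : ℕ, qCoef q a m * z ^ m) * qPochInf q z = qPochInf q (a * z) := by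
  have haz0 : 0 ≤ a * z := mul_nonneg ha0 hz0
  have haz1 : a * z < 1 := by nlinarith
  have hm1 : Multipliable (fun k : ℕ => 1 - z * q ^ k) :=
    multipliable_qfac hq0 hq1 hz0 hz1
  have hm2 : Multipliable (fun k : ℕ => 1 - a * z * q ^ k) :=
    multipliable_qfac hq0 hq1 haz0 haz1
  have hL : Tendsto
      (fun n : ℕ => (∑' m : ℕ, qCoef q a m * z ^ m) * ∏ k ∈ Finset.range n, (1 - z * q ^ k))
      atTop (𝓝 ((∑' m : ℕ, qCoef q a m * z ^ m) * qPochInf q z)) :=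
    (hm1.hasProd.tendsto_prod_nat).const_mul _
  have hR : Tendsto
      (fun n : ℕ => (∑' m : ℕ, qCoef q a m * (q ^ n * z) ^ m)
        * ∏ k ∈ Finset.range n, (1 - a * z * q ^ k))
      atTop (𝓝 (1 * qPochInf q (a * z))) :=
    (tendsto_tail_one hq0 hq1 ha0 ha1 hz0 hz1).mul (hm2.hasProd.tendsto_prod_nat)
  rw [one_mul] at hR
  have hcongr : (fun n : ℕ =>
      (∑' m : ℕ, qCoef q a m * z ^ m) * ∏ k ∈ Finset.range n, (1 - z * q ^ k))
      = fun n : ℕ => (∑' m : ℕ, qCoef q a m * (q ^ n * z) ^ m)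
        * ∏ k ∈ Finset.range n, (1 - a * z * q ^ k) :=
    funext fun n => iterEq hq0 hq1 ha0 ha1 hz0 hz1 n
  rw [hcongr] at hL
  exact tendsto_nhds_unique hL hR

end qBinom

/-- Averaging the q-Hahn jump kernel `φ_{q,μ,ν}(j | ·)` against the q-negative-binomial
gap distribution `π_g = d^g ((ν;q)_g/(q;q)_g)((d;q)_∞/(νd;q)_∞)` yields
`∑_{g ≥ j} φ_{q,μ,ν}(j|g) π_g = (μd)^j ((ν/μ;q)_j/(q;q)_j) ((μd;q)_∞/(νd;q)_∞)`
(the sum over `g ≥ j` is parametrized as `g = j + m`, `m ≥ 0`). -/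
theorem qHahn_effective_jump (q μ ν d : ℝ) (hν : 0 ≤ ν) (hνμ : ν < μ) (hμ : μ < 1)
    (hq0 : 0 ≤ q) (hq1 : q < 1) (hd0 : 0 < d) (hd1 : d < 1) (j : ℕ) :
    ∑' m : ℕ,
        phiQ q μ ν j (j + m) *
          (d ^ (j + m) * (qPoch q ν (j + m) / qPoch q q (j + m)) *
            (qPochInf q d / qPochInf q (ν * d)))
      = (μ * d) ^ j * (qPoch q (ν / μ) j / qPoch q q j) *
          (qPochInf q (μ * d) / qPochInf q (ν * d)) := by
  have hμ0 : 0 ≤ μ := hν.trans hνμ.le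
  have hν1 : ν < 1 := hνμ.trans hμ
  set R : ℝ := qPochInf q d / qPochInf q (ν * d) with hR
  set A : ℝ := (μ * d) ^ j * (qPoch q (ν / μ) j / qPoch q q j) * R with hA
  have hterm : ∀ m : ℕ,
      phiQ q μ ν j (j + m) *
          (d ^ (j + m) * (qPoch q ν (j + m) / qPoch q q (j + m)) * R)
        = A * (qCoef q μ m * d ^ m) := by
    intro m
    have h1 : qPoch q ν (j + m) ≠ 0 := (qPoch_pos hq0 hq1.le hν hν1 _).ne'
    have h2 : qPoch q q (j + m) ≠ 0 := (qPoch_pos hq0 hq1.le hq0 hq1 _).ne'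
    have h3 : qPoch q q j ≠ 0 := (qPoch_pos hq0 hq1.le hq0 hq1 _).ne'
    have h4 : qPoch q q m ≠ 0 := (qPoch_pos hq0 hq1.le hq0 hq1 _).ne'
    unfold phiQ qCoef
    rw [Nat.add_sub_cancel_left, hA]
    rw [pow_add, mul_pow]
    field_simp
  rw [tsum_congr hterm, tsum_mul_left]
  have hkey : (∑' m : ℕ, qCoef q μ m * d ^ m) * qPochInf q d = qPochInf q (μ * d) :=
    qBinomial hq0 hq1 hμ0 hμ hd0.le hd1
  rw [hA, hR]
  linear_combination ((μ * d) ^ j * (qPoch q (ν / μ) j / qPoch q q j) / qPochInf q (ν * d))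
    * hkey
end

section
/- (Fused weight at empty input) For 0 ≤ q < 1, the fused stochastic vertex weight with zero paths entering from below simplifies: with spectral parameter u = qξ/v, L^{(K)}_{ξ q/v, s}(0, j₁ | i₂, j₁ − i₂) = (v/(ξs))^{i₂} · ((s²;q)_{i₂} (q^{−j₁};q)_{i₂}) / ((v q^{−j₁} s/ξ;q)_{i₂} (q;q)_{i₂}) · ((v q^{−j₁} s/ξ;q)_∞ (v/(ξs);q)_∞) / ((v q^{−j₁}/(ξs);q)_∞ (v s/ξ;q)_∞), for 0 ≤ i₂ ≤ j₁ ≤ K. -/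
lemma qPoch_pos_s11 {q a : ℝ} (n : ℕ) (h : ∀ k : ℕ, a * q ^ k < 1) : 0 < qPoch q a n :=
  Finset.prod_pos fun k _ => by linarith [h k]

lemma qPoch_add (q a : ℝ) (m n : ℕ) :
    qPoch q a (m + n) = qPoch q a m * qPoch q (a * q ^ m) n := by
  unfold qPoch
  rw [Finset.prod_range_add]
  congr 1
  refine Finset.prod_congr rfl fun k _ => ?_
  rw [pow_add]; ring

/-- Key reflection identity: `(a/q^j ; q)_i = (-a)^i (∏_{k<i} q^k) q^{-ij} (q^{j+1-i}/a ; q)_i`. -/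
lemma qPoch_reflect (q a : ℝ) (hq : q ≠ 0) (ha : a ≠ 0) (i j : ℕ) (hij : i ≤ j) :
    qPoch q (a / q ^ j) i
      = (-a) ^ i * (∏ k ∈ Finset.range i, q ^ k) / q ^ (i * j) *
          qPoch q (q ^ (j + 1 - i) / a) i := by
  have hqj : (q : ℝ) ^ j ≠ 0 := pow_ne_zero _ hq
  unfold qPoch
  have step1 : ∀ k ∈ Finset.range i,
      (1 - a / q ^ j * q ^ k) = (-a * q ^ k / q ^ j) * (1 - q ^ (j - k) / a) := by
    intro k hk
    have hk' : k < i := Finset.mem_range.mp hk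
    have hpow : q ^ k * q ^ (j - k) = q ^ j := by
      rw [← pow_add]; congr 1; omega
    field_simp
    linear_combination (-1 : ℝ) * hpow
  rw [Finset.prod_congr rfl step1, Finset.prod_mul_distrib]
  have h2 : ∏ k ∈ Finset.range i, (-a * q ^ k / q ^ j)
      = (-a) ^ i * (∏ k ∈ Finset.range i, q ^ k) / q ^ (i * j) := by
    rw [Finset.prod_div_distrib, Finset.prod_mul_distrib, Finset.prod_const,
      Finset.prod_const, ← pow_mul, Finset.card_range, mul_comm j i]
  have h3 : ∏ k ∈ Finset.range i, (1 - q ^ (j - k) / a)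
      = ∏ m ∈ Finset.range i, (1 - q ^ (j + 1 - i) / a * q ^ m) := by
    rw [← Finset.prod_range_reflect (fun m => (1 - q ^ (j + 1 - i) / a * q ^ m)) i]
    refine Finset.prod_congr rfl fun k hk => ?_
    have hk' : k < i := Finset.mem_range.mp hk
    have : j + 1 - i + (i - 1 - k) = j - k := by omega
    rw [← this, pow_add]
    ring
  rw [h2, h3]

lemma qPochInf_aux {q a : ℝ} (hq0 : 0 < q) (hq1 : q < 1) (ha : a < 0) :
    Multipliable (fun j : ℕ => 1 - a * q ^ j) ∧ 0 < qPochInf q a := by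
  have hpos : ∀ j : ℕ, 0 < 1 - a * q ^ j := by
    intro j; nlinarith [pow_pos hq0 j]
  have hone : ∀ j : ℕ, 1 ≤ 1 - a * q ^ j := by
    intro j; nlinarith [pow_pos hq0 j]
  have hs : Summable (fun j : ℕ => Real.log (1 - a * q ^ j)) := by
    refine Summable.of_nonneg_of_le (fun j => Real.log_nonneg (hone j)) (fun j => ?_)
      ((summable_geometric_of_lt_one hq0.le hq1).mul_left (-a))
    calc Real.log (1 - a * q ^ j) ≤ (1 - a * q ^ j) - 1 :=
          Real.log_le_sub_one_of_pos (hpos j)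
      _ = -a * q ^ j := by ring
  have hh : HasProd (fun j : ℕ => 1 - a * q ^ j)
      (Real.exp (∑' j : ℕ, Real.log (1 - a * q ^ j))) := by
    refine (hs.hasSum.rexp).congr_fun fun j => ?_
    exact (Real.exp_log (hpos j)).symm
  refine ⟨⟨_, hh⟩, ?_⟩
  rw [qPochInf, hh.tprod_eq]
  exact Real.exp_pos _

lemma qPochInf_shift {q a : ℝ} (hq0 : 0 < q) (hq1 : q < 1) (ha : a < 0) (n : ℕ) :
    qPochInf q a = qPoch q a n * qPochInf q (a * q ^ n) := by
  have hs : a * q ^ n < 0 := mul_neg_of_neg_of_pos ha (pow_pos hq0 n)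
  have hm : Multipliable (fun j : ℕ => 1 - a * q ^ n * q ^ j) := (qPochInf_aux hq0 hq1 hs).1
  have hm' : Multipliable (fun j : ℕ => 1 - a * q ^ (j + n)) :=
    hm.congr fun j => by rw [pow_add]; ring
  have key := Multipliable.prod_mul_tprod_nat_mul' (f := fun j : ℕ => 1 - a * q ^ j) (k := n) hm'
  unfold qPochInf qPoch
  rw [← key]
  congr 1
  exact tprod_congr fun j => by
    show 1 - a * q ^ (j + n) = 1 - a * q ^ n * q ^ j
    rw [pow_add]; ring


lemma qPoch_pos_of_neg {q a : ℝ} (hq : 0 < q) (ha : a < 0) (n : ℕ) : 0 < qPoch q a n :=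
  qPoch_pos_s11 n fun k => by nlinarith [pow_pos hq k]

set_option maxHeartbeats 1600000 in
/-- Simplification of the fused stochastic vertex weight with zero paths entering from
below, at spectral parameter `u = qξ/v`: the explicit rational form
`L^{(K)}_{ξq/v,s}(0, j₁ | i₂, j₁−i₂)
 = ((s²;q)_{i₂}/(q;q)_{i₂}) ((q^{1+j₁−i₂};q)_{i₂} s^{2(j₁−i₂)} (qξ/(vs);q)_{j₁−i₂})/((qξs/v;q)_{j₁})`
equals the qNB-type product
`(v/(ξs))^{i₂} ((s²;q)_{i₂}(q^{−j₁};q)_{i₂})/((vq^{−j₁}s/ξ;q)_{i₂}(q;q)_{i₂})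
 · ((vq^{−j₁}s/ξ;q)_∞ (v/(ξs);q)_∞)/((vq^{−j₁}/(ξs);q)_∞ (vs/ξ;q)_∞)`,
for `0 ≤ i₂ ≤ j₁ ≤ K`. -/
theorem fused_weight_empty_input (q s ξ v : ℝ) (hq0 : 0 < q) (hq1 : q < 1)
    (hs0 : 0 < s) (hs1 : s < 1) (hξ : 0 < ξ) (hv : v < 0)
    (K i₂ j₁ : ℕ) (hij : i₂ ≤ j₁) (hjK : j₁ ≤ K) :
    (qPoch q (s ^ 2) i₂ / qPoch q q i₂) *
        (qPoch q (q ^ (1 + j₁ - i₂)) i₂ * s ^ (2 * (j₁ - i₂)) *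
          qPoch q (q * ξ / (v * s)) (j₁ - i₂)) / qPoch q (q * ξ * s / v) j₁
      = (v / (ξ * s)) ^ i₂ *
          (qPoch q (s ^ 2) i₂ * qPoch q (q ^ (-(j₁ : ℤ))) i₂) /
            (qPoch q (v * q ^ (-(j₁ : ℤ)) * s / ξ) i₂ * qPoch q q i₂) *
          ((qPochInf q (v * q ^ (-(j₁ : ℤ)) * s / ξ) * qPochInf q (v / (ξ * s))) /
            (qPochInf q (v * q ^ (-(j₁ : ℤ)) / (ξ * s)) * qPochInf q (v * s / ξ))) := by
  obtain ⟨d, rfl⟩ : ∃ d, j₁ = i₂ + d := ⟨j₁ - i₂, by omega⟩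
  have hq' : q ≠ 0 := hq0.ne'
  have hs' : s ≠ 0 := hs0.ne'
  have hξ' : ξ ≠ 0 := hξ.ne'
  have hv' : v ≠ 0 := hv.ne
  have hqj : (0:ℝ) < q ^ (i₂ + d) := pow_pos hq0 _
  have hA : v * s / ξ < 0 := div_neg_of_neg_of_pos (mul_neg_of_neg_of_pos hv hs0) hξ
  have hB : v / (ξ * s) < 0 := div_neg_of_neg_of_pos hv (mul_pos hξ hs0)
  have ez : (q:ℝ) ^ (-((i₂ + d : ℕ) : ℤ)) = 1 / q ^ (i₂ + d) := by
    rw [zpow_neg, zpow_natCast, one_div]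
  rw [ez]
  have e1 : v * (1 / q ^ (i₂ + d)) * s / ξ = (v * s / ξ) / q ^ (i₂ + d) := by ring
  have e2 : v * (1 / q ^ (i₂ + d)) / (ξ * s) = (v / (ξ * s)) / q ^ (i₂ + d) := by ring
  rw [e1, e2]
  have n1 : 1 + (i₂ + d) - i₂ = 1 + d := by omega
  have n2 : (i₂ + d) - i₂ = d := by omega
  rw [n1, n2]
  -- infinite product reduction
  have hA' : (v * s / ξ) / q ^ (i₂ + d) < 0 := div_neg_of_neg_of_pos hA hqj
  have hB' : (v / (ξ * s)) / q ^ (i₂ + d) < 0 := div_neg_of_neg_of_pos hB hqj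
  have I1 : qPochInf q ((v * s / ξ) / q ^ (i₂ + d))
      = qPoch q ((v * s / ξ) / q ^ (i₂ + d)) (i₂ + d) * qPochInf q (v * s / ξ) := by
    have h := qPochInf_shift hq0 hq1 hA' (i₂ + d)
    rwa [div_mul_cancel₀ _ (ne_of_gt hqj)] at h
  have I2 : qPochInf q ((v / (ξ * s)) / q ^ (i₂ + d))
      = qPoch q ((v / (ξ * s)) / q ^ (i₂ + d)) (i₂ + d) * qPochInf q (v / (ξ * s)) := by
    have h := qPochInf_shift hq0 hq1 hB' (i₂ + d)
    rwa [div_mul_cancel₀ _ (ne_of_gt hqj)] at h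
  rw [I1, I2]
  -- reflection identities
  have n3 : (i₂ + d) + 1 - i₂ = 1 + d := by omega
  have n4 : (i₂ + d) + 1 - (i₂ + d) = 1 := by omega
  have R1 := qPoch_reflect q 1 hq' one_ne_zero i₂ (i₂ + d) (by omega)
  rw [n3, div_one] at R1
  have R2 := qPoch_reflect q (v * s / ξ) hq' (ne_of_lt hA) i₂ (i₂ + d) (by omega)
  rw [n3] at R2
  have R3 := qPoch_reflect q (v * s / ξ) hq' (ne_of_lt hA) (i₂ + d) (i₂ + d) le_rfl
  rw [n4, pow_one] at R3
  have R4 := qPoch_reflect q (v / (ξ * s)) hq' (ne_of_lt hB) (i₂ + d) (i₂ + d) le_rfl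
  rw [n4, pow_one] at R4
  -- align arguments
  have a1 : q * ξ / (v * s) = q / (v * s / ξ) := by rw [div_div_eq_mul_div]
  have a2 : q * ξ * s / v = q / (v / (ξ * s)) := by rw [div_div_eq_mul_div]; ring
  rw [a1, a2, R1, R2, R3, R4]
  -- splitting (q/A ; q)_{i₂+d} = (q/A)_d (q^{1+d}/A)_{i₂}
  have Sp : qPoch q (q / (v * s / ξ)) (i₂ + d)
      = qPoch q (q / (v * s / ξ)) d * qPoch q (q ^ (1 + d) / (v * s / ξ)) i₂ := by
    have h := qPoch_add q (q / (v * s / ξ)) d i₂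
    rw [add_comm d i₂] at h
    rw [h]
    congr 2
    rw [pow_add, pow_one]
    ring
  rw [Sp]
  -- nonzero facts
  have hX2 : qPoch q q i₂ ≠ 0 := by
    refine (qPoch_pos_s11 i₂ fun k => ?_).ne'
    have h1 := pow_le_one₀ hq0.le hq1.le (n := k)
    nlinarith [pow_pos hq0 k]
  have hW : qPoch q (q / (v / (ξ * s))) (i₂ + d) ≠ 0 :=
    (qPoch_pos_of_neg hq0 (div_neg_of_pos_of_neg hq0 hB) _).ne'
  have hZ2 : qPoch q (q ^ (1 + d) / (v * s / ξ)) i₂ ≠ 0 :=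
    (qPoch_pos_of_neg hq0 (div_neg_of_pos_of_neg (pow_pos hq0 _) hA) _).ne'
  have hPA : qPochInf q (v * s / ξ) ≠ 0 := (qPochInf_aux hq0 hq1 hA).2.ne'
  have hPB : qPochInf q (v / (ξ * s)) ≠ 0 := (qPochInf_aux hq0 hq1 hB).2.ne'
  have hCi : (∏ k ∈ Finset.range i₂, q ^ k) ≠ 0 :=
    (Finset.prod_pos fun k _ => pow_pos hq0 k).ne'
  have hCj : (∏ k ∈ Finset.range (i₂ + d), q ^ k) ≠ 0 :=
    (Finset.prod_pos fun k _ => pow_pos hq0 k).ne'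
  have hqp1 : (q:ℝ) ^ (i₂ * (i₂ + d)) ≠ 0 := pow_ne_zero _ hq'
  have hqp2 : (q:ℝ) ^ ((i₂ + d) * (i₂ + d)) ≠ 0 := pow_ne_zero _ hq'
  have hm1 : ((-1 : ℝ)) ^ i₂ ≠ 0 := pow_ne_zero _ (by norm_num)
  have hm2 : ((-1 : ℝ)) ^ d ≠ 0 := pow_ne_zero _ (by norm_num)
  have hm3 : ((-1 : ℝ)) ^ (i₂ + d) ≠ 0 := pow_ne_zero _ (by norm_num)
  set X1 := qPoch q (s ^ 2) i₂ with hX1def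
  set X2 := qPoch q q i₂ with hX2def
  set Y := qPoch q (q ^ (1 + d)) i₂ with hYdef
  set Z1 := qPoch q (q / (v * s / ξ)) d with hZ1def
  set Z2 := qPoch q (q ^ (1 + d) / (v * s / ξ)) i₂ with hZ2def
  set W := qPoch q (q / (v / (ξ * s))) (i₂ + d) with hWdef
  set PA := qPochInf q (v * s / ξ) with hPAdef
  set PB := qPochInf q (v / (ξ * s)) with hPBdef
  set Ci := ∏ k ∈ Finset.range i₂, q ^ k with hCidef
  set Cj := ∏ k ∈ Finset.range (i₂ + d), q ^ k with hCjdef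
  field_simp
  rw [eq_div_iff (mul_ne_zero (pow_ne_zero _ (neg_ne_zero.mpr hA.ne)) (pow_ne_zero _ (neg_ne_zero.mpr hB.ne)))]
  have hAB : v * s / ξ = v / (ξ * s) * s ^ 2 := by field_simp
  rw [hAB]
  ring
end
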